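/- arXiv:quant-ph/0209106 — 2 statements merged into one kernel-verified Lean document; each statement's English description precedes it below -/
import Mathlib

section
/- For the continuous-time quantum walk on K_n (n ≥ 2) with Hamiltonian H = (1/(n-1))(J_n - I_n) started at vertex 0, the amplitude at any vertex j ≠ 0 at time t is (1/n)(e^{it/(n-1)} - e^{-it}) up to sign, and hence the probability at vertex j ≠ 0 is P_t(j) = (4/n²) sin²(tn/(2(n-1))). -/
open Matrix Complex Nat

lemma exp_smul_idem {A : Type*} [NormedRing A] [NormedAlgebra ℂ A] [CompleteSpace A]
    (p : A) (hp : p * p = p) (a : ℂ) :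
    NormedSpace.exp (a • p) = 1 + (NormedSpace.exp a - 1) • p := by
  have hpk : ∀ k : ℕ, 1 ≤ k → p ^ k = p := by
    intro k hk
    induction k with
    | zero => omega
    | succ m ih =>
      rcases Nat.eq_or_lt_of_le hk with h | h
      · simp [← h]
      · rw [pow_succ, ih (by omega), hp]
  have hsum1 : Summable fun k : ℕ => (a ^ k / k !) • p :=
    (NormedSpace.expSeries_div_summable a).smul_const p
  have hsum2 : Summable fun k : ℕ => (if k = 0 then (1 : A) - p else 0) :=
    summable_of_ne_finset_zero (s := {0}) (fun k hk => by simp at hk; simp [hk])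
  have key : ∀ k : ℕ, ((k ! : ℂ))⁻¹ • (a • p) ^ k
      = (a ^ k / k !) • p + (if k = 0 then (1 : A) - p else 0) := by
    intro k
    rcases Nat.eq_zero_or_pos k with h | h
    · subst h; simp
    · rw [smul_pow, hpk k h]
      simp [Nat.pos_iff_ne_zero.mp h, div_eq_inv_mul, smul_smul]
  rw [NormedSpace.exp_eq_tsum ℂ]
  dsimp only
  rw [tsum_congr key, Summable.tsum_add hsum1 hsum2,
    Summable.tsum_smul_const (NormedSpace.expSeries_div_summable a), tsum_ite_eq]
  have h2 : (∑' (z : ℕ), a ^ z / (z ! : ℂ)) = NormedSpace.exp a := by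
    rw [NormedSpace.exp_eq_tsum_div]
  rw [h2, sub_smul, one_smul]
  abel

lemma matrix_exp_smul_idem {m : Type*} [Fintype m] [DecidableEq m]
    (p : Matrix m m ℂ) (hp : p * p = p) (a : ℂ) :
    NormedSpace.exp (a • p) = 1 + (NormedSpace.exp a - 1) • p := by
  letI : SeminormedRing (Matrix m m ℂ) := Matrix.linftyOpSemiNormedRing
  letI : NormedRing (Matrix m m ℂ) := Matrix.linftyOpNormedRing
  letI : NormedAlgebra ℂ (Matrix m m ℂ) := Matrix.linftyOpNormedAlgebra
  exact exp_smul_idem p hp a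

/-- For the continuous-time quantum walk on `K_n` (`n ≥ 2`) with Hamiltonian
`H = (1/(n-1))(J_n - I_n)` started at vertex `0`, the amplitude at any vertex `j ≠ 0`
at time `t` is `(1/n)(e^{it/(n-1)} - e^{-it})` up to sign, and hence the probability
at vertex `j ≠ 0` is `P_t(j) = (4/n²) sin²(tn/(2(n-1)))`. -/
theorem completeGraph_offDiagonal_amplitude (n : ℕ) (hn : 2 ≤ n) (t : ℝ)
    (H : Matrix (Fin n) (Fin n) ℂ)
    (hH : H = ((n : ℂ) - 1)⁻¹ • ((Matrix.of fun _ _ => (1 : ℂ)) - 1))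
    (ψ : Fin n → ℂ)
    (hψ : ψ = (NormedSpace.exp ((-(t : ℂ) * Complex.I) • H)).mulVec
      (fun j => if j = ⟨0, by omega⟩ then 1 else 0))
    (j : Fin n) (hj : j ≠ ⟨0, by omega⟩) :
    (ψ j = (n : ℂ)⁻¹ * (Complex.exp (Complex.I * t / ((n : ℂ) - 1)) -
        Complex.exp (-(Complex.I * t))) ∨
     ψ j = -((n : ℂ)⁻¹ * (Complex.exp (Complex.I * t / ((n : ℂ) - 1)) -
        Complex.exp (-(Complex.I * t))))) ∧
    ‖ψ j‖ ^ 2 = 4 / (n : ℝ) ^ 2 * Real.sin (t * n / (2 * ((n : ℝ) - 1))) ^ 2 := by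
  have hnn : ((n : ℕ) : ℂ) ≠ 0 := Nat.cast_ne_zero.mpr (by omega)
  have hn1 : ((n : ℂ) - 1) ≠ 0 := sub_ne_zero.mpr (by exact_mod_cast (by omega : n ≠ 1))
  have hnR : ((n : ℝ) - 1) ≠ 0 := by
    have : (2 : ℝ) ≤ (n : ℝ) := by exact_mod_cast hn
    linarith
  set J : Matrix (Fin n) (Fin n) ℂ := Matrix.of fun _ _ => (1 : ℂ) with hJdef
  set P : Matrix (Fin n) (Fin n) ℂ := (n : ℂ)⁻¹ • J with hPdef
  have hJJ : J * J = (n : ℂ) • J := by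
    ext i k
    simp [hJdef, Matrix.mul_apply, Finset.sum_const]
  have hP : P * P = P := by
    rw [hPdef, Matrix.smul_mul, Matrix.mul_smul, hJJ, smul_smul, smul_smul,
      mul_assoc, inv_mul_cancel₀ hnn, mul_one]
  set s : ℂ := -(t : ℂ) * Complex.I * ((n : ℂ) - 1)⁻¹ with hs
  have hM : (-(t : ℂ) * Complex.I) • H = s • J + (-s) • (1 : Matrix (Fin n) (Fin n) ℂ) := by
    rw [hH, smul_smul, smul_sub, ← hs, neg_smul, ← sub_eq_add_neg]
  have hsJ : s • J = (s * n) • P := by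
    rw [hPdef, smul_smul, mul_assoc, mul_inv_cancel₀ hnn, mul_one]
  have hcomm : Commute (s • J) ((-s) • (1 : Matrix (Fin n) (Fin n) ℂ)) := by
    show _ * _ = _ * _
    simp [Matrix.mul_smul, Matrix.smul_mul, smul_smul, mul_comm]
  have hE : NormedSpace.exp ((-(t : ℂ) * Complex.I) • H)
      = NormedSpace.exp (-s) • (1 + (NormedSpace.exp (s * n) - 1) • P) := by
    rw [hM, Matrix.exp_add_of_commute _ _ hcomm, hsJ, matrix_exp_smul_idem P hP,
      matrix_exp_smul_idem 1 (one_mul 1) (-s)]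
    have h12 : (1 : Matrix (Fin n) (Fin n) ℂ) +
        (NormedSpace.exp (-s) - 1) • (1 : Matrix (Fin n) (Fin n) ℂ)
        = NormedSpace.exp (-s) • (1 : Matrix (Fin n) (Fin n) ℂ) := by
      rw [sub_smul, one_smul]; abel
    rw [h12, Matrix.mul_smul, mul_one]
  have hψj : ψ j = (NormedSpace.exp ((-(t : ℂ) * Complex.I) • H)) j ⟨0, by omega⟩ := by
    rw [hψ]
    simp [Matrix.mulVec, dotProduct]
  have h2 : NormedSpace.exp (-s) * NormedSpace.exp (s * n)
      = Complex.exp (-(Complex.I * t)) := by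
    rw [← NormedSpace.exp_add, ← Complex.exp_eq_exp_ℂ]
    congr 1
    rw [hs]
    field_simp
    ring
  have h3 : NormedSpace.exp (-s) = Complex.exp (Complex.I * t / ((n : ℂ) - 1)) := by
    rw [← Complex.exp_eq_exp_ℂ]
    congr 1
    rw [hs]
    field_simp
  have hval : ψ j = (n : ℂ)⁻¹ * (Complex.exp (-(Complex.I * t)) -
      Complex.exp (Complex.I * t / ((n : ℂ) - 1))) := by
    rw [hψj, hE]
    simp only [Matrix.smul_apply, Matrix.add_apply, Matrix.one_apply_ne hj, hPdef, hJdef,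
      Matrix.smul_apply, Matrix.of_apply, smul_eq_mul]
    linear_combination (n : ℂ)⁻¹ * h2 - (n : ℂ)⁻¹ * h3
  constructor
  · right
    rw [hval]
    ring
  · rw [hval, norm_mul, mul_pow, norm_inv, Complex.norm_natCast]
    set a : ℝ := t / ((n : ℝ) - 1) with ha
    set b : ℝ := -t with hb
    set d : ℝ := t * n / (2 * ((n : ℝ) - 1)) with hd
    have hA' : Complex.exp (Complex.I * t / ((n : ℂ) - 1)) = Complex.exp ((a : ℂ) * Complex.I) := by
      congr 1
      rw [ha]
      push_cast
      ring
    have hB' : Complex.exp (-(Complex.I * t)) = Complex.exp ((b : ℂ) * Complex.I) := by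
      congr 1
      rw [hb]
      push_cast
      ring
    have hdiff : Complex.exp ((b : ℂ) * Complex.I) - Complex.exp ((a : ℂ) * Complex.I)
        = ((Real.cos b - Real.cos a : ℝ) : ℂ) + ((Real.sin b - Real.sin a : ℝ) : ℂ) * Complex.I := by
      rw [Complex.exp_mul_I, Complex.exp_mul_I]
      push_cast
      ring
    have h1 : b - a = -(2 * d) := by
      rw [ha, hb, hd]
      field_simp
      ring
    have e1 : Real.cos b * Real.cos a + Real.sin b * Real.sin a = 1 - 2 * Real.sin d ^ 2 := by
      rw [← Real.cos_sub, h1, Real.cos_neg, Real.cos_two_mul]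
      nlinarith [Real.sin_sq_add_cos_sq d]
    have habs : ‖Complex.exp (-(Complex.I * t)) -
        Complex.exp (Complex.I * t / ((n : ℂ) - 1))‖ ^ 2 = 4 * Real.sin d ^ 2 := by
      rw [hB', hA', hdiff, Complex.sq_norm, Complex.normSq_add_mul_I]
      nlinarith [Real.sin_sq_add_cos_sq a, Real.sin_sq_add_cos_sq b, e1]
    rw [habs]
    field_simp
end

section
/- For the continuous-time quantum walk on the balanced complete a-partite graph K_{b,...,b} (a parts of size b, ab vertices) started at vertex 0, the probability at any vertex j in a different part from 0 equals P_t(j) = (4/(ab)²) sin²(ta/(2(a−1))). -/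
open Matrix Complex Kronecker

lemma exp_smul_idem_gen {𝔸 : Type*} [NormedRing 𝔸] [NormedAlgebra ℂ 𝔸] [CompleteSpace 𝔸]
    (P : 𝔸) (hP : P * P = P) (c : ℂ) :
    NormedSpace.exp (c • P) = 1 + (Complex.exp c - 1) • P := by
  have hpow : ∀ n : ℕ, P ^ (n + 1) = P := by
    intro n
    induction n with
    | zero => simp
    | succ n ih => rw [pow_succ, ih, hP]
  have hs : Summable fun n : ℕ => ((n.factorial : ℂ))⁻¹ • (c • P) ^ n :=
    NormedSpace.expSeries_summable' (𝕂 := ℂ) (c • P)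
  have hgs : Summable fun n : ℕ => ((n.factorial : ℂ))⁻¹ • c ^ n :=
    NormedSpace.expSeries_summable' (𝕂 := ℂ) c
  have hgs1 : Summable fun n : ℕ => (((n+1).factorial : ℂ))⁻¹ * c ^ (n + 1) := by
    have := (summable_nat_add_iff (f := fun n : ℕ => ((n.factorial : ℂ))⁻¹ • c ^ n) 1).2 hgs
    simpa [smul_eq_mul] using this
  simp only [NormedSpace.exp_eq_tsum (𝕂 := ℂ)]
  rw [Summable.tsum_eq_zero_add hs]
  have h1 : ∀ n : ℕ, (((n+1).factorial : ℂ))⁻¹ • (c • P) ^ (n + 1)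
      = ((((n+1).factorial : ℂ))⁻¹ * c ^ (n + 1)) • P := by
    intro n
    rw [smul_pow, hpow, smul_smul]
  simp only [pow_zero, Nat.factorial_zero, Nat.cast_one, inv_one, one_smul, h1]
  rw [Summable.tsum_smul_const hgs1]
  congr 2
  have hexp : Complex.exp c = ∑' n : ℕ, ((n.factorial : ℂ))⁻¹ • c ^ n := by
    rw [Complex.exp_eq_exp_ℂ, NormedSpace.exp_eq_tsum (𝕂 := ℂ)]
  rw [hexp, Summable.tsum_eq_zero_add hgs]
  simp [smul_eq_mul]

lemma Matrix.exp_smul_idem {m : Type*} [Fintype m] [DecidableEq m]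
    (P : Matrix m m ℂ) (hP : P * P = P) (c : ℂ) :
    NormedSpace.exp (c • P) = 1 + (Complex.exp c - 1) • P := by
  letI : SeminormedRing (Matrix m m ℂ) := Matrix.linftyOpSemiNormedRing
  letI : NormedRing (Matrix m m ℂ) := Matrix.linftyOpNormedRing
  letI : NormedAlgebra ℂ (Matrix m m ℂ) := Matrix.linftyOpNormedAlgebra
  exact exp_smul_idem_gen P hP c

/-- For the continuous-time quantum walk on the balanced complete `a`-partite graph
`K_{b,…,b}` (`a` parts of size `b`, `ab` vertices) started at vertex `0`, the probability
at any vertex `j` in a different part from `0` equals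
`P_t(j) = (4/(ab)²) sin²(ta/(2(a−1)))`. -/
theorem multipartite_offPart_probability (a b : ℕ) (ha : 2 ≤ a) (hb : 1 ≤ b) (t : ℝ)
    (H : Matrix (Fin a × Fin b) (Fin a × Fin b) ℂ)
    (hH : H = (((a : ℂ) - 1)⁻¹ • ((Matrix.of fun _ _ => (1 : ℂ)) - 1)) ⊗ₖ
        ((b : ℂ)⁻¹ • (Matrix.of fun _ _ => (1 : ℂ))))
    (ψ : Fin a × Fin b → ℂ)
    (hψ : ψ = (NormedSpace.exp ((-(t : ℂ) * Complex.I) • H)).mulVec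
      (fun j => if j = (⟨0, by omega⟩, ⟨0, by omega⟩) then 1 else 0))
    (j : Fin a × Fin b) (hj : j.1 ≠ ⟨0, by omega⟩) :
    ‖ψ j‖ ^ 2 =
      4 / ((a : ℝ) * b) ^ 2 * Real.sin (t * a / (2 * ((a : ℝ) - 1))) ^ 2 := by
  have ha0 : (a : ℂ) ≠ 0 := by exact_mod_cast Nat.cast_ne_zero.2 (by omega)
  have hb0 : (b : ℂ) ≠ 0 := by exact_mod_cast Nat.cast_ne_zero.2 (by omega)
  have ha1 : (a : ℂ) - 1 ≠ 0 := by
    intro h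
    have : (a : ℂ) = 1 := by linear_combination h
    have : a = 1 := by exact_mod_cast this
    omega
  set K : Matrix (Fin a × Fin b) (Fin a × Fin b) ℂ :=
    Matrix.of (fun _ _ => ((a : ℂ) * b)⁻¹) with hKdef
  set S : Matrix (Fin a × Fin b) (Fin a × Fin b) ℂ :=
    Matrix.of (fun p q => if p.1 = q.1 then (b : ℂ)⁻¹ else 0) with hSdef
  have hKK : K * K = K := by
    ext p q
    simp only [hKdef, Matrix.mul_apply, Matrix.of_apply, Finset.sum_const,
      Finset.card_univ, Fintype.card_prod, Fintype.card_fin, nsmul_eq_mul]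
    push_cast
    field_simp
  have hKS : K * S = K := by
    ext p q
    simp only [hKdef, hSdef, Matrix.mul_apply, Matrix.of_apply, Fintype.sum_prod_type,
      mul_ite, mul_zero]
    rw [Finset.sum_comm]
    simp only [Finset.sum_ite_eq', Finset.mem_univ, if_true, Finset.sum_const,
      Finset.card_univ, Fintype.card_fin, nsmul_eq_mul]
    field_simp
  have hSK : S * K = K := by
    ext p q
    simp only [hKdef, hSdef, Matrix.mul_apply, Matrix.of_apply, Fintype.sum_prod_type,
      ite_mul, zero_mul]
    rw [Finset.sum_comm]
    simp only [Finset.sum_ite_eq, Finset.mem_univ, if_true, Finset.sum_const,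
      Finset.card_univ, Fintype.card_fin, nsmul_eq_mul]
    field_simp
  have hSS : S * S = S := by
    ext p q
    simp only [hSdef, Matrix.mul_apply, Matrix.of_apply, Fintype.sum_prod_type,
      ite_mul, zero_mul, mul_ite, mul_zero]
    rw [Finset.sum_comm]
    simp only [Finset.sum_ite_eq', Finset.mem_univ, if_true, Finset.sum_const,
      Finset.card_univ, Fintype.card_fin, nsmul_eq_mul]
    by_cases h : p.1 = q.1 <;> simp [h] <;> field_simp
  set R : Matrix (Fin a × Fin b) (Fin a × Fin b) ℂ := S - K with hRdef
  have hRR : R * R = R := by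
    rw [hRdef, sub_mul, mul_sub, mul_sub, hSS, hSK, hKS, hKK]
    simp
  have hKR : K * R = 0 := by rw [hRdef, mul_sub, hKS, hKK, sub_self]
  have hRK : R * K = 0 := by rw [hRdef, sub_mul, hSK, hKK, sub_self]
  set c₁ : ℂ := -(t : ℂ) * Complex.I with hc1
  set c₂ : ℂ := (t : ℂ) * Complex.I / ((a : ℂ) - 1) with hc2
  have hM : (-(t : ℂ) * Complex.I) • H = c₁ • K + c₂ • R := by
    rw [hH]
    ext p q
    simp only [hRdef, hKdef, hSdef, Matrix.smul_apply, Matrix.add_apply, Matrix.sub_apply,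
      Matrix.kroneckerMap_apply, Matrix.of_apply, Matrix.one_apply, smul_eq_mul, hc1, hc2]
    by_cases h : p.1 = q.1 <;> simp [h] <;> field_simp <;> ring
  have hcomm : Commute (c₁ • K) (c₂ • R) := by
    unfold Commute SemiconjBy
    rw [smul_mul_smul_comm, smul_mul_smul_comm, hKR, hRK, smul_zero, smul_zero]
  have hexpM : NormedSpace.exp ((-(t : ℂ) * Complex.I) • H)
      = 1 + (Complex.exp c₁ - 1) • K + (Complex.exp c₂ - 1) • R := by
    rw [hM, Matrix.exp_add_of_commute _ _ hcomm,
      Matrix.exp_smul_idem K hKK c₁, Matrix.exp_smul_idem R hRR c₂]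
    rw [add_mul, one_mul, mul_add, mul_one, smul_mul_smul_comm, hKR, smul_zero, add_zero]
    abel
  have hz0 : (fun p : Fin a × Fin b => if p = (⟨0, by omega⟩, ⟨0, by omega⟩) then (1:ℂ) else 0)
      = Pi.single (⟨0, by omega⟩, ⟨0, by omega⟩) 1 := by
    ext p
    simp [Pi.single_apply]
  have hψj : ψ j = Complex.exp c₁ / ((a : ℂ) * b) - Complex.exp c₂ / ((a : ℂ) * b) := by
    rw [hψ, hz0, Matrix.mulVec_single_one, hexpM]
    have hjne : j ≠ (⟨0, by omega⟩, ⟨0, by omega⟩) := by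
      intro h; exact hj (by rw [h])
    simp only [Matrix.col_apply, Matrix.add_apply, Matrix.smul_apply, Matrix.one_apply_ne hjne,
      hKdef, hRdef, hSdef, Matrix.sub_apply, Matrix.of_apply, smul_eq_mul]
    rw [if_neg hj]
    field_simp
    ring
  have hab0 : (a : ℝ) * b ≠ 0 := by positivity
  -- rewrite the exponentials with real angles
  have he1 : Complex.exp c₁ = Complex.exp ((-t : ℝ) * Complex.I) := by
    rw [hc1]; push_cast; ring_nf
  have he2 : Complex.exp c₂ = Complex.exp (((t / ((a:ℝ) - 1)) : ℝ) * Complex.I) := by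
    rw [hc2]
    congr 1
    have : ((a : ℂ) - 1) = (((a : ℝ) - 1 : ℝ) : ℂ) := by push_cast; ring
    rw [this]
    push_cast
    ring
  have ha1R : (a : ℝ) - 1 ≠ 0 := by
    have : (2 : ℝ) ≤ (a : ℝ) := by exact_mod_cast ha
    linarith
  set θ₁ : ℝ := -t with hθ1
  set θ₂ : ℝ := t / ((a : ℝ) - 1) with hθ2
  have key : ‖(Complex.exp ((θ₁ : ℂ) * Complex.I)
      - Complex.exp ((θ₂ : ℂ) * Complex.I))‖ ^ 2 = 2 - 2 * Real.cos (θ₁ - θ₂) := by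
    rw [Complex.sq_norm, Complex.normSq_apply, Complex.sub_re, Complex.sub_im,
      Complex.exp_ofReal_mul_I_re, Complex.exp_ofReal_mul_I_im,
      Complex.exp_ofReal_mul_I_re, Complex.exp_ofReal_mul_I_im, Real.cos_sub]
    nlinarith [Real.sin_sq_add_cos_sq θ₁, Real.sin_sq_add_cos_sq θ₂]
  have habs : ‖ψ j‖ ^ 2
      = (2 - 2 * Real.cos (θ₁ - θ₂)) / ((a : ℝ) * b) ^ 2 := by
    have hψj' : ψ j = (Complex.exp ((θ₁ : ℂ) * Complex.I)
        - Complex.exp ((θ₂ : ℂ) * Complex.I)) * (((a : ℝ) * b : ℝ) : ℂ)⁻¹ := by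
      rw [hψj, he1, he2]
      push_cast
      ring
    rw [hψj', norm_mul, norm_inv, Complex.norm_real, Real.norm_eq_abs, abs_of_pos (by positivity : (0:ℝ) < (a:ℝ)*b),
      mul_pow, key, inv_pow]
    ring
  rw [habs]
  have hθ : θ₁ - θ₂ = -(t * a / ((a : ℝ) - 1)) := by
    rw [hθ1, hθ2]
    field_simp
    ring
  rw [hθ, Real.cos_neg]
  set u : ℝ := t * a / ((a : ℝ) - 1) with hu
  have h2 : 2 * (u / 2) = u := by ring
  have hc := Real.cos_sq (u / 2)
  rw [h2] at hc
  have hs := Real.sin_sq_add_cos_sq (u / 2)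
  have hu2 : u / 2 = t * a / (2 * ((a : ℝ) - 1)) := by
    rw [hu, div_div, mul_comm ((a:ℝ) - 1) 2]
  have h4 : 2 - 2 * Real.cos u = 4 * Real.sin (u / 2) ^ 2 := by
    linarith [hc, hs]
  rw [← hu2, h4]
  ring
end
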